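/- arXiv:2112.13295 — 2 statements merged into one kernel-verified Lean document; each statement's English description precedes it below -/
import Mathlib

section
/- (Consistency and stability of the discrete bilinear form built from the elliptic projection and a stabilization, equation (4.18).) Let σ^* ≥ σ_* > 0 and let S : V × V → ℝ be a symmetric bilinear form such that σ_* a(v,v) ≤ S(v,v) ≤ σ^* a(v,v) for every v ∈ V with Πv = 0. Define a_h(u,v) := a(Πu, Πv) + S(u − Πu, v − Πv). Then: (i) (consistency) a_h(v, q) = a(v, q) for every v ∈ V and every q ∈ P; (ii) (stability) min(1, σ_*) · a(v,v) ≤ a_h(v,v) ≤ max(1, σ^*) · a(v,v) for every v ∈ V. -/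
/-- **Consistency and stability of the discrete bilinear form (equation (4.18)).**
Let `a` be a symmetric positive semidefinite bilinear form on a real vector space `V`,
`P ⊆ V` a subspace, and `Π : V → P` a linear map with the elliptic projection properties
`a(Πv − v, q) = 0` for all `q ∈ P` and `Πq = q` for all `q ∈ P`.  Let `S` be a symmetric
bilinear form with `σ_* a(v,v) ≤ S(v,v) ≤ σ^* a(v,v)` whenever `Πv = 0`, and define
`a_h(u,v) := a(Πu, Πv) + S(u − Πu, v − Πv)`.  Then:
(i) (consistency) `a_h(v, q) = a(v, q)` for every `v ∈ V` and `q ∈ P`;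
(ii) (stability) `min(1, σ_*) a(v,v) ≤ a_h(v,v) ≤ max(1, σ^*) a(v,v)` for every `v ∈ V`. -/
theorem vem_bilinear_form_consistency_and_stability
    {V : Type*} [AddCommGroup V] [Module ℝ V]
    (a S : V → V → ℝ)
    -- a is a symmetric positive semidefinite bilinear form
    (ha_symm : ∀ u v, a u v = a v u)
    (ha_add : ∀ u v w, a (u + v) w = a u w + a v w)
    (ha_smul : ∀ (c : ℝ) (u v : V), a (c • u) v = c * a u v)
    (ha_pos : ∀ v, 0 ≤ a v v)
    -- S is a symmetric bilinear form
    (hS_symm : ∀ u v, S u v = S v u)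
    (hS_add : ∀ u v w, S (u + v) w = S u w + S v w)
    (hS_smul : ∀ (c : ℝ) (u v : V), S (c • u) v = c * S u v)
    -- the polynomial subspace and the elliptic projection
    (P : Submodule ℝ V)
    (Pi : V →ₗ[ℝ] V) (hPi_mem : ∀ v, Pi v ∈ P)
    (hPi_a : ∀ v, ∀ q ∈ P, a (Pi v - v) q = 0)
    (hPi_poly : ∀ q ∈ P, Pi q = q)
    -- the stabilization bounds
    (σs σS : ℝ) (hσs : 0 < σs) (hσσ : σs ≤ σS)
    (hS_bound : ∀ v : V, Pi v = 0 → σs * a v v ≤ S v v ∧ S v v ≤ σS * a v v)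
    -- the discrete bilinear form
    (ah : V → V → ℝ)
    (hah : ∀ u v, ah u v = a (Pi u) (Pi v) + S (u - Pi u) (v - Pi v)) :
    (∀ v : V, ∀ q ∈ P, ah v q = a v q) ∧
    (∀ v : V, min 1 σs * a v v ≤ ah v v ∧ ah v v ≤ max 1 σS * a v v) := by
  -- bilinearity consequences
  have ha_zero : ∀ u : V, a u 0 = 0 := by
    intro u
    have := ha_smul 0 0 u
    simpa [ha_symm u 0, zero_smul] using this
  have hS_zero : ∀ u : V, S u 0 = 0 := by
    intro u
    have := hS_smul 0 0 u
    simpa [hS_symm u 0, zero_smul] using this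
  have ha_neg : ∀ u v : V, a (-u) v = - a u v := by
    intro u v
    have := ha_smul (-1) u v
    simpa using this
  have ha_sub : ∀ u v w : V, a (u - v) w = a u w - a v w := by
    intro u v w
    have := ha_add u (-v) w
    simp [sub_eq_add_neg, ha_neg] at this ⊢
    linarith [this]
  -- Π(v - Πv) = 0
  have hPiw : ∀ v : V, Pi (v - Pi v) = 0 := by
    intro v
    have := hPi_poly (Pi v) (hPi_mem v)
    simp [map_sub, this]
  -- cross term vanishes: a (v - Πv) (Πv) = 0
  have hcross : ∀ v : V, a (v - Pi v) (Pi v) = 0 := by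
    intro v
    have h := hPi_a v (Pi v) (hPi_mem v)
    have : a (v - Pi v) (Pi v) = - a (Pi v - v) (Pi v) := by
      rw [ha_sub, ha_sub]; ring
    rw [this, h]; ring
  -- Pythagoras
  have hpyth : ∀ v : V, a v v = a (Pi v) (Pi v) + a (v - Pi v) (v - Pi v) := by
    intro v
    have h1 : a v v = a (Pi v + (v - Pi v)) (Pi v + (v - Pi v)) := by
      congr 1 <;> abel
    have hc := hcross v
    have hc2 : a (Pi v) (v - Pi v) = 0 := by rw [ha_symm]; exact hc
    rw [h1, ha_add, ha_symm (Pi v) _, ha_symm (v - Pi v) _, ha_add, ha_add]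
    rw [ha_symm (v - Pi v) (Pi v)] at hc
    rw [ha_symm (v - Pi v) (Pi v)]
    linarith [hc2]
  constructor
  · intro v q hq
    rw [hah]
    rw [hPi_poly q hq]
    have h1 : S (v - Pi v) (q - q) = 0 := by simpa using hS_zero (v - Pi v)
    rw [h1]
    have h2 := hPi_a v q hq
    rw [ha_sub] at h2
    linarith
  · intro v
    rw [hah]
    have hb := hS_bound (v - Pi v) (hPiw v)
    have hp := hpyth v
    have h1 := ha_pos (Pi v)
    have h2 := ha_pos (v - Pi v)
    have hmin1 : min 1 σs ≤ 1 := min_le_left _ _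
    have hmin2 : min 1 σs ≤ σs := min_le_right _ _
    have hmax1 : (1:ℝ) ≤ max 1 σS := le_max_left _ _
    have hmax2 : σS ≤ max 1 σS := le_max_right _ _
    constructor <;> nlinarith [hb.1, hb.2]
end

section
/- (Unisolvence of the edge degrees of freedom: endpoint derivatives plus interior moments.) Let m ≥ 1 and r ≥ 2m − 1 be integers and let a < b be real numbers. If a real polynomial p of degree at most r satisfies p^{(j)}(a) = 0 and p^{(j)}(b) = 0 for all j = 0, …, m − 1, and ∫_a^b p(x) x^i dx = 0 for all i = 0, …, r − 2m, then p = 0. Consequently, a polynomial of degree at most r is uniquely determined by these r + 1 = 2m + (r − 2m + 1) values. -/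
/-!
The endpoint conditions say that `a` and `b` are roots of multiplicity at least `m`, so
`p = (X - a)^m (X - b)^m q` with `deg q ≤ r - 2m`. The moment conditions then make `p`
orthogonal to `q` on `[a, b]`, while `p q = (-1)^m (x - a)^m (b - x)^m q^2` has an integral of
strict sign unless `q = 0`.
-/

open MeasureTheory Polynomial Set

theorem intervalIntegral_pos_of_pos_on_Ioo_diff {f : ℝ → ℝ} {a b : ℝ} {s : Set ℝ}
    (hab : a < b) (hfi : IntervalIntegrable f volume a b) (hs : volume s = 0)
    (hpos : ∀ x ∈ Ioo a b \ s, 0 < f x) : 0 < ∫ x in a..b, f x := by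
  have hnonneg : 0 ≤ᵐ[volume.restrict (uIoc a b)] f := by
    rw [Filter.EventuallyLE, uIoc_of_le hab.le]
    refine ae_restrict_of_ae_eq_of_ae_restrict Ioo_ae_eq_Ioc ?_
    rw [ae_restrict_iff' measurableSet_Ioo]
    filter_upwards [measure_eq_zero_iff_ae_notMem.mp hs] with x hxs hx
      using (hpos x ⟨hx, hxs⟩).le
  rw [intervalIntegral.integral_pos_iff_support_of_nonneg_ae' hnonneg hfi]
  refine ⟨hab, ?_⟩
  calc 0 < volume (Ioo a b \ s) := by
        rw [measure_sdiff_null hs]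
        exact Measure.measure_Ioo_pos _ |>.mpr hab
    _ ≤ volume (Function.support f ∩ Ioc a b) := measure_mono fun x hx =>
      ⟨(hpos x hx).ne', Ioo_subset_Ioc_self hx.1⟩

namespace Polynomial

theorem X_sub_C_pow_dvd_of_iterate_derivative_eval_eq_zero {R : Type*} [CommRing R] [IsDomain R]
    [CharZero R] {p : R[X]} {t : R} {m : ℕ}
    (h : ∀ j < m, (derivative^[j] p).eval t = 0) : (X - C t) ^ m ∣ p := by
  rcases eq_or_ne p 0 with rfl | hp
  · exact dvd_zero _
  rcases m.eq_zero_or_pos with rfl | hm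
  · simp
  rw [← le_rootMultiplicity_iff hp]
  have := lt_rootMultiplicity_of_isRoot_iterate_derivative (n := m - 1) hp
    fun j hj => h j (by omega)
  omega

theorem intervalIntegral_mul_eval_eq_zero {f : ℝ → ℝ} {a b : ℝ} {n : ℕ}
    (hf : IntervalIntegrable f volume a b) (hmom : ∀ i < n, ∫ x in a..b, f x * x ^ i = 0)
    {q : ℝ[X]} (hq : q.natDegree < n) : ∫ x in a..b, f x * q.eval x = 0 := by
  have hsum : ∀ x, f x * q.eval x =
      ∑ i ∈ Finset.range (q.natDegree + 1), q.coeff i * (f x * x ^ i) := fun x => by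
    rw [eval_eq_sum_range, Finset.mul_sum]
    exact Finset.sum_congr rfl fun i _ => by ring
  simp only [hsum]
  rw [intervalIntegral.integral_finsetSum fun i _ =>
    (hf.mul_continuousOn (continuous_pow i).continuousOn).const_mul _]
  refine Finset.sum_eq_zero fun i hi => ?_
  rw [intervalIntegral.integral_const_mul, hmom i (by grind), mul_zero]

theorem eq_zero_of_iterate_derivative_eval_eq_zero_of_moments_eq_zero {m r : ℕ} {a b : ℝ}
    (hab : a < b) {p : ℝ[X]} (hdeg : p.natDegree ≤ r)
    (hend : ∀ j < m, (derivative^[j] p).eval a = 0 ∧ (derivative^[j] p).eval b = 0)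
    (hmom : ∀ i < r + 1 - 2 * m, ∫ x in a..b, p.eval x * x ^ i = 0) : p = 0 := by
  by_contra hp
  have hcop : IsCoprime ((X - C a) ^ m) ((X - C b) ^ m : ℝ[X]) :=
    (isCoprime_X_sub_C_of_isUnit_sub (sub_ne_zero.2 hab.ne).isUnit).pow
  obtain ⟨q, rfl⟩ := hcop.mul_dvd
    (X_sub_C_pow_dvd_of_iterate_derivative_eval_eq_zero fun j hj => (hend j hj).1)
    (X_sub_C_pow_dvd_of_iterate_derivative_eval_eq_zero fun j hj => (hend j hj).2)
  have hq : q ≠ 0 := by rintro rfl; simp at hp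
  have hqdeg : q.natDegree < r + 1 - 2 * m := by
    rw [natDegree_mul (by simp [X_sub_C_ne_zero]) hq, natDegree_mul (by simp [X_sub_C_ne_zero])
      (by simp [X_sub_C_ne_zero])] at hdeg
    simp only [natDegree_pow, natDegree_X_sub_C, mul_one] at hdeg
    omega
  set w : ℝ → ℝ := fun x => (x - a) ^ m * (b - x) ^ m * q.eval x ^ 2
  have hsign : ∀ x, ((X - C a) ^ m * (X - C b) ^ m * q).eval x * q.eval x = (-1) ^ m * w x := by
    intro x
    simp only [w, eval_mul, eval_pow, eval_sub, eval_X, eval_C]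
    rw [show x - b = -(b - x) by ring, neg_pow]
    ring
  have horth := intervalIntegral_mul_eval_eq_zero
    ((Polynomial.continuous _).intervalIntegrable a b) hmom hqdeg
  have hpos : 0 < ∫ x in a..b, w x :=
    intervalIntegral_pos_of_pos_on_Ioo_diff hab
      ((by fun_prop : Continuous w).intervalIntegrable a b)
      ((q.finite_setOfPred_isRoot hq).measure_zero volume) fun x ⟨⟨hax, hxb⟩, hqx⟩ =>
        mul_pos (mul_pos (pow_pos (sub_pos.2 hax) m) (pow_pos (sub_pos.2 hxb) m))
          (pow_two_pos_of_ne_zero hqx)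
  simp only [hsign, intervalIntegral.integral_const_mul] at horth
  exact hpos.ne' ((mul_eq_zero.1 horth).resolve_left (pow_ne_zero _ (by norm_num)))

end Polynomial

theorem edge_dofs_unisolvent_general
    (m r : ℕ) (a b : ℝ) (hab : a < b) :
    (∀ p : Polynomial ℝ, p.degree ≤ (r : ℕ) →
      (∀ j < m, (Polynomial.derivative^[j] p).eval a = 0 ∧
                (Polynomial.derivative^[j] p).eval b = 0) →
      (∀ i < r + 1 - 2 * m, ∫ x in a..b, p.eval x * x ^ i = 0) →
      p = 0) ∧
    (∀ p q : Polynomial ℝ, p.degree ≤ (r : ℕ) → q.degree ≤ (r : ℕ) →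
      (∀ j < m, (Polynomial.derivative^[j] p).eval a = (Polynomial.derivative^[j] q).eval a ∧
                (Polynomial.derivative^[j] p).eval b = (Polynomial.derivative^[j] q).eval b) →
      (∀ i < r + 1 - 2 * m,
        (∫ x in a..b, p.eval x * x ^ i) = ∫ x in a..b, q.eval x * x ^ i) →
      p = q) := by
  have unisolvent : ∀ p : ℝ[X], p.degree ≤ r →
      (∀ j < m, (derivative^[j] p).eval a = 0 ∧ (derivative^[j] p).eval b = 0) →
      (∀ i < r + 1 - 2 * m, ∫ x in a..b, p.eval x * x ^ i = 0) → p = 0 :=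
    fun p hdeg => eq_zero_of_iterate_derivative_eval_eq_zero_of_moments_eq_zero hab
      (natDegree_le_iff_degree_le.mpr hdeg)
  refine ⟨unisolvent, fun p q hp hq hend hmom => sub_eq_zero.mp ?_⟩
  refine unisolvent (p - q) ((degree_sub_le p q).trans (max_le hp hq)) (fun j hj => ?_)
    fun i hi => ?_
  · simp only [iterate_derivative_sub, eval_sub, (hend j hj).1, (hend j hj).2, sub_self, and_self]
  · simp only [eval_sub, sub_mul]
    have hint (s : ℝ[X]) : IntervalIntegrable (fun x => s.eval x * x ^ i) volume a b :=
      (by fun_prop : Continuous _).intervalIntegrable a b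
    rw [intervalIntegral.integral_sub (hint p) (hint q), hmom i hi, sub_self]

/-- **Unisolvence of the edge degrees of freedom: endpoint derivatives plus interior
moments.**  Let `m ≥ 1`, `r ≥ 2m − 1` and `a < b`.  If a real polynomial `p` of degree at
most `r` satisfies `p^{(j)}(a) = p^{(j)}(b) = 0` for all `j = 0, …, m − 1` and
`∫_a^b p(x) x^i dx = 0` for all `i = 0, …, r − 2m`, then `p = 0`.  Consequently, a
polynomial of degree at most `r` is uniquely determined by these `r + 1` values. -/
theorem edge_dofs_unisolvent
    (m r : ℕ) (hm : 1 ≤ m) (hr : 2 * m - 1 ≤ r) (a b : ℝ) (hab : a < b) :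
    (∀ p : Polynomial ℝ, p.degree ≤ (r : ℕ) →
      (∀ j < m, (Polynomial.derivative^[j] p).eval a = 0 ∧
                (Polynomial.derivative^[j] p).eval b = 0) →
      (∀ i < r + 1 - 2 * m, ∫ x in a..b, p.eval x * x ^ i = 0) →
      p = 0) ∧
    (∀ p q : Polynomial ℝ, p.degree ≤ (r : ℕ) → q.degree ≤ (r : ℕ) →
      (∀ j < m, (Polynomial.derivative^[j] p).eval a = (Polynomial.derivative^[j] q).eval a ∧
                (Polynomial.derivative^[j] p).eval b = (Polynomial.derivative^[j] q).eval b) →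
      (∀ i < r + 1 - 2 * m,
        (∫ x in a..b, p.eval x * x ^ i) = ∫ x in a..b, q.eval x * x ^ i) →
      p = q) :=
  edge_dofs_unisolvent_general m r a b hab
end
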